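/- arXiv:2206.07122 — 2 statements merged into one kernel-verified Lean document; each statement's English description precedes it below -/
import Mathlib

section
/- Consider a random variable Y on {1,2,3} with probabilities (p₁,p₂,p₃), p₁+p₂+p₃=1, and the random partition Z taking the singleton partition with probability q₁ and the partition {{1,2},{3}} with probability 1−q₁ (0 ≤ q₁ ≤ 1). Then the structured entropy H(Y_Z) = q₁·H(p₁,p₂,p₃) + (1−q₁)·h(p₁+p₂) is maximized over distributions (p₁,p₂,p₃) when p₁ = p₂ = 1/(2(1+2^{−q₁})), where entropy is computed with logarithm base 2 and h is the binary entropy function. -/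
/-- Base-2 Shannon entropy of a distribution `(p₁, p₂, p₃)` on three points. -/
noncomputable def H3 (p1 p2 p3 : ℝ) : ℝ :=
  -(p1 * Real.logb 2 p1 + p2 * Real.logb 2 p2 + p3 * Real.logb 2 p3)

/-- Binary entropy function (base 2). -/
noncomputable def binH (s : ℝ) : ℝ :=
  -(s * Real.logb 2 s + (1 - s) * Real.logb 2 (1 - s))

/-- Structured entropy of the three-point example:
`H(Y_Z) = q₁ · H(p₁,p₂,p₃) + (1−q₁) · h(p₁+p₂)` for the random partition taking the
singleton partition with probability `q₁` and `{{1,2},{3}}` with probability `1−q₁`. -/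
noncomputable def strEnt3 (q1 p1 p2 p3 : ℝ) : ℝ :=
  q1 * H3 p1 p2 p3 + (1 - q1) * binH (p1 + p2)

/-!
Write `η = negMulLog` and `s = p₁ + p₂`; in nats the objective is
`q (η p₁ + η p₂) + (1 - q) η s + η p₃`. Concavity of `η` gives `η p₁ + η p₂ ≤ η s + s log 2`,
with equality at `p₁ = p₂`, so for `q ≥ 0` the objective is at most `η s + η p₃ + (q log 2) s`.
By the Gibbs variational inequality this is at most `log (2^q + 1)`, with equality at the
softmax point `s = 2^q / (2^q + 1)`, which is `p₁ = p₂ = 1/(2(1+2^{-q}))`.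
-/

open Real Finset

/-- The tangent line of the concave function `negMulLog` at `r` lies above it. -/
lemma negMulLog_le_neg_mul_log_add_sub {x r : ℝ} (hx : 0 ≤ x) (hr : 0 < r) :
    negMulLog x ≤ -x * log r + (r - x) := by
  rcases hx.eq_or_lt with rfl | hx
  · simpa using hr.le
  have hlog := log_le_sub_one_of_pos (div_pos hr hx)
  rw [log_div hr.ne' hx.ne'] at hlog
  have hscaled := mul_le_mul_of_nonneg_left hlog hx.le
  rw [show x * (r / x - 1) = r - x by field_simp] at hscaled
  rw [negMulLog]
  linarith

lemma negMulLog_add_le {x y : ℝ} (hx : 0 ≤ x) (hy : 0 ≤ y) :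
    negMulLog x + negMulLog y ≤ negMulLog (x + y) + (x + y) * log 2 := by
  have h := concaveOn_negMulLog.2 (Set.mem_Ici.2 hx) (Set.mem_Ici.2 hy)
    (by norm_num : (0 : ℝ) ≤ 1 / 2) (by norm_num : (0 : ℝ) ≤ 1 / 2) (by norm_num)
  have hhalf : negMulLog ((x + y) * (1 / 2)) = negMulLog (x + y) / 2 + (x + y) * log 2 / 2 := by
    rw [negMulLog_mul, one_div, negMulLog, negMulLog, log_inv]; ring
  simp only [smul_eq_mul] at h
  rw [show 1 / 2 * x + 1 / 2 * y = (x + y) * (1 / 2) by ring, hhalf] at h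
  linarith

lemma negMulLog_add_self (x : ℝ) :
    negMulLog x + negMulLog x = negMulLog (x + x) + (x + x) * log 2 := by
  rw [show x + x = 2 * x by ring, negMulLog_mul, negMulLog, negMulLog]; ring

section Gibbs

variable {ι : Type*} {s : Finset ι} {p : ι → ℝ} (a : ι → ℝ)

lemma sum_negMulLog_add_mul_le_log_sum_exp (hp : ∀ i ∈ s, 0 ≤ p i) (hp1 : ∑ i ∈ s, p i = 1) :
    ∑ i ∈ s, (negMulLog (p i) + a i * p i) ≤ log (∑ i ∈ s, exp (a i)) := by
  set Z := ∑ i ∈ s, exp (a i)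
  have hs : s.Nonempty := nonempty_of_sum_ne_zero (by rw [hp1]; exact one_ne_zero)
  have hZ : 0 < Z := sum_pos (fun i _ ↦ exp_pos _) hs
  have hterm : ∀ i ∈ s, negMulLog (p i) + a i * p i ≤ p i * log Z + (exp (a i) / Z - p i) := by
    intro i hi
    have h := negMulLog_le_neg_mul_log_add_sub (hp i hi) (div_pos (exp_pos (a i)) hZ)
    rw [log_div (exp_pos _).ne' hZ.ne', log_exp] at h
    linarith
  calc ∑ i ∈ s, (negMulLog (p i) + a i * p i)
      ≤ ∑ i ∈ s, (p i * log Z + (exp (a i) / Z - p i)) := sum_le_sum hterm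
    _ = log Z := by
      rw [sum_add_distrib, sum_sub_distrib, ← sum_mul, ← sum_div, hp1, div_self hZ.ne']
      ring

lemma sum_negMulLog_add_mul_eq_log_sum_exp (hs : s.Nonempty)
    (hp : ∀ i ∈ s, p i = exp (a i) / ∑ j ∈ s, exp (a j)) :
    ∑ i ∈ s, (negMulLog (p i) + a i * p i) = log (∑ i ∈ s, exp (a i)) := by
  set Z := ∑ i ∈ s, exp (a i)
  have hZ : 0 < Z := sum_pos (fun i _ ↦ exp_pos _) hs
  have hp1 : ∑ i ∈ s, p i = 1 := by
    rw [sum_congr rfl hp, ← sum_div, div_self hZ.ne']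
  calc ∑ i ∈ s, (negMulLog (p i) + a i * p i) = ∑ i ∈ s, p i * log Z := by
        refine sum_congr rfl fun i hi ↦ ?_
        rw [hp i hi, negMulLog, log_div (exp_pos _).ne' hZ.ne', log_exp]
        ring
    _ = log Z := by rw [← sum_mul, hp1, one_mul]

end Gibbs

lemma strEnt3_mul_log_two {q p1 p2 p3 : ℝ} (hsum : p1 + p2 + p3 = 1) :
    strEnt3 q p1 p2 p3 * log 2 =
      q * (negMulLog p1 + negMulLog p2) + (1 - q) * negMulLog (p1 + p2) + negMulLog p3 := by
  have hlog2 : log 2 ≠ 0 := (log_pos one_lt_two).ne'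
  obtain rfl : p3 = 1 - (p1 + p2) := by linarith
  simp only [strEnt3, H3, binH, logb, negMulLog]
  field_simp
  ring

lemma strEnt3_le_logb {q p1 p2 p3 : ℝ} (hq : 0 ≤ q) (h1 : 0 ≤ p1) (h2 : 0 ≤ p2) (h3 : 0 ≤ p3)
    (hsum : p1 + p2 + p3 = 1) :
    strEnt3 q p1 p2 p3 ≤ logb 2 (2 ^ q + 1) := by
  have hmerge := negMulLog_add_le h1 h2
  have hgibbs := sum_negMulLog_add_mul_le_log_sum_exp (s := univ) (p := ![p1 + p2, p3])
    ![log 2 * q, 0] (by simp [Fin.forall_fin_two, add_nonneg h1 h2, h3]) (by simpa using hsum)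
  simp only [Fin.sum_univ_two, Matrix.cons_val_zero, Matrix.cons_val_one, zero_mul, add_zero,
    exp_zero, ← rpow_def_of_pos two_pos] at hgibbs
  rw [logb, le_div_iff₀ (log_pos one_lt_two), strEnt3_mul_log_two hsum]
  calc q * (negMulLog p1 + negMulLog p2) + (1 - q) * negMulLog (p1 + p2) + negMulLog p3
      ≤ q * (negMulLog (p1 + p2) + (p1 + p2) * log 2) + (1 - q) * negMulLog (p1 + p2)
          + negMulLog p3 := by gcongr
    _ = negMulLog (p1 + p2) + (p1 + p2) * (log 2 * q) + negMulLog p3 := by ring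
    _ ≤ log (2 ^ q + 1) := by linarith

lemma strEnt3_maximizer_eq_logb (q : ℝ) :
    strEnt3 q (1 / (2 * (1 + (2 : ℝ) ^ (-q)))) (1 / (2 * (1 + (2 : ℝ) ^ (-q))))
      (1 - 2 * (1 / (2 * (1 + (2 : ℝ) ^ (-q))))) = logb 2 (2 ^ q + 1) := by
  set m := 1 / (2 * (1 + (2 : ℝ) ^ (-q)))
  have ht : 0 < (2 : ℝ) ^ q := rpow_pos_of_pos two_pos q
  have hm : m + m = 2 ^ q / (2 ^ q + 1) := by
    simp only [m, rpow_neg zero_le_two]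
    field_simp
    ring
  have hc : 1 - 2 * m = 1 / (2 ^ q + 1) := by
    rw [← two_mul] at hm
    rw [hm]
    field_simp
    ring
  have hsoftmax := sum_negMulLog_add_mul_eq_log_sum_exp (s := univ) (p := ![m + m, 1 - 2 * m])
    ![log 2 * q, 0] univ_nonempty (by
      simp only [Fin.forall_fin_two, mem_univ, forall_const, Fin.sum_univ_two,
        Matrix.cons_val_zero, Matrix.cons_val_one, exp_zero, ← rpow_def_of_pos two_pos]
      exact ⟨hm, hc⟩)
  simp only [Fin.sum_univ_two, Matrix.cons_val_zero, Matrix.cons_val_one, zero_mul, add_zero,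
    exp_zero, ← rpow_def_of_pos two_pos] at hsoftmax
  rw [logb, eq_div_iff (log_pos one_lt_two).ne', strEnt3_mul_log_two (by ring), ← hsoftmax,
    negMulLog_add_self]
  ring

theorem strEnt3_le_max_general (q1 : ℝ) (hq0 : 0 ≤ q1)
    (p1 p2 p3 : ℝ) (h1 : 0 ≤ p1) (h2 : 0 ≤ p2) (h3 : 0 ≤ p3)
    (hsum : p1 + p2 + p3 = 1) :
    strEnt3 q1 p1 p2 p3
      ≤ strEnt3 q1 (1 / (2 * (1 + (2 : ℝ) ^ (-q1)))) (1 / (2 * (1 + (2 : ℝ) ^ (-q1))))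
          (1 - 2 * (1 / (2 * (1 + (2 : ℝ) ^ (-q1))))) := by
  rw [strEnt3_maximizer_eq_logb]
  exact strEnt3_le_logb hq0 h1 h2 h3 hsum

/-- the structured entropy of the three-point example is maximized over
probability distributions `(p₁,p₂,p₃)` at `p₁ = p₂ = 1/(2(1+2^{−q₁}))`
(and `p₃ = 1 − p₁ − p₂`). -/
theorem strEnt3_le_max (q1 : ℝ) (hq0 : 0 ≤ q1) (hq1 : q1 ≤ 1)
    (p1 p2 p3 : ℝ) (h1 : 0 ≤ p1) (h2 : 0 ≤ p2) (h3 : 0 ≤ p3)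
    (hsum : p1 + p2 + p3 = 1) :
    strEnt3 q1 p1 p2 p3
      ≤ strEnt3 q1 (1 / (2 * (1 + (2 : ℝ) ^ (-q1)))) (1 / (2 * (1 + (2 : ℝ) ^ (-q1))))
          (1 - 2 * (1 / (2 * (1 + (2 : ℝ) ^ (-q1))))) :=
  strEnt3_le_max_general q1 hq0 p1 p2 p3 h1 h2 h3 hsum
end

section
/- For the three-point example with q₁ = 1 (all weight on the singleton partition), the structured entropy is maximized at the uniform distribution (1/3, 1/3, 1/3); and in the limit q₁ → 0, the maximizing distribution with p₁ = p₂ tends to (1/4, 1/4, 1/2). -/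
open Filter

/-- The maximizing value `p₁ = p₂ = 1/(2(1+2^{−q₁}))` as a function of `q₁`. -/
noncomputable def pstar (q1 : ℝ) : ℝ := 1 / (2 * (1 + (2 : ℝ) ^ (-q1)))

/-! At `q₁ = 1` the structured entropy is the Shannon entropy, which Gibbs' inequality bounds by
that of the uniform law. The limit statements hold because `pstar` is continuous with
`pstar 0 = 1/4`. -/

open Real Finset in
/-- Jensen's inequality for the concave `negMulLog` with uniform weights. -/
theorem Real.sum_negMulLog_le_log_card {ι : Type*} [Fintype ι] (p : ι → ℝ)
    (h0 : ∀ i, 0 ≤ p i) (h1 : ∑ i, p i = 1) :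
    ∑ i, negMulLog (p i) ≤ log (Fintype.card ι : ℝ) := by
  rcases isEmpty_or_nonempty ι with hι | hι
  · simp at h1
  set n : ℝ := (Fintype.card ι : ℝ)
  have hn : 0 < n := by simp [n, Fintype.card_pos]
  have jensen := concaveOn_negMulLog.le_map_sum (t := univ) (w := fun _ => n⁻¹) (p := p)
    (fun _ _ => by positivity) (by simp [n]) (fun i _ => Set.mem_Ici.mpr (h0 i))
  simp only [smul_eq_mul, ← mul_sum, h1, mul_one] at jensen
  calc ∑ i, negMulLog (p i) = n * (n⁻¹ * ∑ i, negMulLog (p i)) := by field_simp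
    _ ≤ n * negMulLog n⁻¹ := by gcongr
    _ = log n := by rw [negMulLog, log_inv]; field_simp

theorem H3_eq_sum_negMulLog (p1 p2 p3 : ℝ) :
    H3 p1 p2 p3 = (∑ i, Real.negMulLog (![p1, p2, p3] i)) / Real.log 2 := by
  simp only [H3, Fin.sum_univ_three, Real.negMulLog, Real.logb, Matrix.cons_val_zero,
    Matrix.cons_val_one, Matrix.cons_val]
  ring

theorem H3_le_logb_three {p1 p2 p3 : ℝ} (h1 : 0 ≤ p1) (h2 : 0 ≤ p2) (h3 : 0 ≤ p3)
    (hsum : p1 + p2 + p3 = 1) : H3 p1 p2 p3 ≤ Real.logb 2 3 := by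
  have gibbs := Real.sum_negMulLog_le_log_card ![p1, p2, p3]
    (by simp [Fin.forall_fin_succ, h1, h2, h3]) (by simp [Fin.sum_univ_three, hsum])
  rw [H3_eq_sum_negMulLog, Real.logb]
  gcongr
  simpa using gibbs

theorem H3_uniform : H3 (1/3) (1/3) (1/3) = Real.logb 2 3 := by
  rw [H3, one_div, Real.logb_inv]
  ring

theorem strEnt3_one (p1 p2 p3 : ℝ) : strEnt3 1 p1 p2 p3 = H3 p1 p2 p3 := by
  simp [strEnt3]

theorem tendsto_pstar_nhds_zero : Tendsto pstar (nhds 0) (nhds (1/4)) := by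
  have hcont : Continuous pstar :=
    continuous_const.div
      (continuous_const.mul (continuous_const.add
        ((Real.continuous_const_rpow two_ne_zero).comp continuous_neg)))
      fun q => by positivity
  convert hcont.tendsto 0 using 2
  norm_num [pstar]

/-- for `q₁ = 1` the structured entropy is maximized at the uniform
distribution `(1/3, 1/3, 1/3)`; and as `q₁ → 0⁺`, the maximizing distribution
`(p*, p*, 1 − 2p*)` with `p* = 1/(2(1+2^{−q₁}))` tends to `(1/4, 1/4, 1/2)`. -/
theorem strEnt3_uniform_max_and_limit :
    (∀ p1 p2 p3 : ℝ, 0 ≤ p1 → 0 ≤ p2 → 0 ≤ p3 → p1 + p2 + p3 = 1 →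
        strEnt3 1 p1 p2 p3 ≤ strEnt3 1 (1/3) (1/3) (1/3)) ∧
      Tendsto pstar (nhdsWithin 0 (Set.Ioi 0)) (nhds (1/4)) ∧
      Tendsto (fun q1 => 1 - 2 * pstar q1) (nhdsWithin 0 (Set.Ioi 0)) (nhds (1/2)) := by
  refine ⟨fun p1 p2 p3 h1 h2 h3 hsum => ?_, ?_, ?_⟩
  · rw [strEnt3_one, strEnt3_one, H3_uniform]
    exact H3_le_logb_three h1 h2 h3 hsum
  · exact tendsto_pstar_nhds_zero.mono_left nhdsWithin_le_nhds
  · have h := (tendsto_pstar_nhds_zero.const_mul 2).const_sub 1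
    norm_num at h
    exact h.mono_left nhdsWithin_le_nhds
end
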